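/- For γ > 0, the proximal operator of γ·g* is given by: prox_{γg*}(v) = v if |v| ≤ τ; prox_{γg*}(v) = τ·sign(v) if τ < |v| ≤ τ + γμ; and prox_{γg*}(v) = prox_{γh*}(v) if |v| > τ + γμ. -/

import Mathlib

noncomputable section

open Set
open scoped Classical

/-- Convex (Fenchel) conjugate of an extended-real-valued function on `ℝ`. -/
def conj (f : ℝ → EReal) (v : ℝ) : EReal := ⨆ x : ℝ, ((v * x : ℝ) : EReal) - f x

/-- Convex subdifferential of an extended-real-valued function on `ℝ`. -/
def subdiff (f : ℝ → EReal) (x : ℝ) : Set ℝ :=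
  {d : ℝ | ∀ y : ℝ, f x + ((d * (y - x) : ℝ) : EReal) ≤ f y}

/-- Convexity of an extended-real-valued function on `ℝ`. -/
def EConvexOn (f : ℝ → EReal) : Prop :=
  ∀ x y a b : ℝ, 0 ≤ a → 0 ≤ b → a + b = 1 →
    f (a * x + b * y) ≤ (a : EReal) * f x + (b : EReal) * f y

/-- The ℓ₀-penalized regularizer `g(x) = λ‖x‖₀ + h(x)`. -/
def gfun (lam : ℝ) (h : ℝ → EReal) (x : ℝ) : EReal :=
  (if x = 0 then (0 : EReal) else (lam : EReal)) + h x

/-- The parameter `τ = sup {v ≥ 0 : h*(v) ≤ λ}` (as a real number). -/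
def tau (lam : ℝ) (h : ℝ → EReal) : ℝ :=
  sSup {v : ℝ | 0 ≤ v ∧ conj h v ≤ (lam : EReal)}

/-- The parameter `μ = sup {x ≥ 0 : x ∈ ∂h*(τ)}` if `∂h*(τ) ≠ ∅`, else `+∞`. -/
def mu (lam : ℝ) (h : ℝ → EReal) : EReal :=
  if (subdiff (conj h) (tau lam h)).Nonempty then
    sSup ((fun x : ℝ => (x : EReal)) '' {x : ℝ | 0 ≤ x ∧ x ∈ subdiff (conj h) (tau lam h)})
  else ⊤

/-- The parameter `β = sup {v ≥ 0 : v ∈ dom h*}`. -/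
def beta (h : ℝ → EReal) : EReal :=
  sSup ((fun v : ℝ => (v : EReal)) '' {v : ℝ | 0 ≤ v ∧ conj h v ≠ ⊤})

/-- The parameter `κ = sup {v ≥ 0 : v ∈ ∂h(μ)}` if `μ < +∞`, else `+∞`. -/
def kappa (lam : ℝ) (h : ℝ → EReal) : EReal :=
  if mu lam h ≠ ⊤ then
    sSup ((fun v : ℝ => (v : EReal)) '' {v : ℝ | 0 ≤ v ∧ v ∈ subdiff h (mu lam h).toReal})
  else ⊤

/-- The set of minimizers of `u ↦ ½(u − v)² + γ·ω(u)`, i.e. `prox_{γω}(v)`. -/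
def proxSet (γ : ℝ) (ω : ℝ → EReal) (v : ℝ) : Set ℝ :=
  {u : ℝ | ∀ w : ℝ,
    ((2⁻¹ * (u - v) ^ 2 : ℝ) : EReal) + (γ : EReal) * ω u ≤
      ((2⁻¹ * (w - v) ^ 2 : ℝ) : EReal) + (γ : EReal) * ω w}

/-!
Write `F = h*` and `φ = g*`. Conjugating `g = λ‖·‖₀ + h` gives `φ = max 0 (F - λ)`: `φ` vanishes
on `[-τ, τ]` and equals `F - λ` for `|x| > τ`. Both are convex, so `u ∈ prox_{γω}(v)` iff
`(v - u) / γ ∈ ∂ω(u)`, and the prox is single-valued.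

For `|v| ≤ τ`, `v` itself minimises `φ`. If `F` is finite somewhere beyond `τ`, then `τ` is interior
to `dom F`, hence `F(τ) = λ` by continuity and `∂F(τ) ≠ ∅`, so every subgradient of `F` at `τ` lies
below the slopes of `F` to the right of `τ`; therefore `[0, μ] ⊆ ∂φ(τ)`, which settles
`τ < |v| ≤ τ + γμ`. Finally, subgradients of `F` or of `φ` at points of `[-τ, τ]` are bounded by `μ`
in absolute value, so for `|v| > τ + γμ` the prox point `u` of either function has `|u| > τ`. Near
such `u` the functions `φ` and `F - λ` agree, and subgradients of convex functions are local.
-/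

open Filter Topology

lemma apply_abs_of_even {Φ : ℝ → EReal} (heven : ∀ x, Φ (-x) = Φ x) (x : ℝ) : Φ |x| = Φ x := by
  rcases abs_choice x with hx | hx <;> simp [hx, heven]

section Subdiff

variable {Φ : ℝ → EReal}

lemma ne_top_of_mem_subdiff {x y d : ℝ} (hd : d ∈ subdiff Φ x) (hy : Φ y ≠ ⊤) : Φ x ≠ ⊤ :=
  fun hx => by
    have hdy := hd y
    rw [hx, EReal.top_add_coe, top_le_iff] at hdy
    exact hy hdy

lemma neg_mem_subdiff_neg (heven : ∀ x, Φ (-x) = Φ x) {x d : ℝ} (hd : d ∈ subdiff Φ x) :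
    -d ∈ subdiff Φ (-x) := fun y => by
  have h := hd (-y)
  rwa [heven y, show d * (-y - x) = -d * (y - -x) by ring, ← heven x] at h

lemma mem_subdiff_of_le_of_forall_lt {x t d : ℝ} (ht : t ∈ subdiff Φ x) (htd : t ≤ d)
    (hd : ∀ y, x < y → Φ x + ((d * (y - x) : ℝ) : EReal) ≤ Φ y) : d ∈ subdiff Φ x := by
  intro y
  rcases le_or_gt y x with hyx | hxy
  · refine le_trans (add_le_add le_rfl ?_) (ht y)
    exact_mod_cast mul_le_mul_of_nonpos_right htd (sub_nonpos.2 hyx)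
  · exact hd y hxy

lemma sub_mul_sub_nonneg_of_mem_subdiff (hbot : ∀ x, Φ x ≠ ⊥) {x y d e : ℝ} (hx : Φ x ≠ ⊤)
    (hd : d ∈ subdiff Φ x) (he : e ∈ subdiff Φ y) : 0 ≤ (d - e) * (x - y) := by
  have hdy := hd y
  have hex := he x
  have hy := ne_top_of_mem_subdiff he hx
  lift Φ x to ℝ using ⟨hx, hbot x⟩ with r
  lift Φ y to ℝ using ⟨hy, hbot y⟩ with s
  have h1 : r + d * (y - x) ≤ s := by exact_mod_cast hdy
  have h2 : s + e * (x - y) ≤ r := by exact_mod_cast hex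
  nlinarith

lemma exists_nonneg_mem_subdiff_of_even (hbot : ∀ x, Φ x ≠ ⊥) (heven : ∀ x, Φ (-x) = Φ x)
    {x : ℝ} (hx0 : 0 ≤ x) (hx : Φ x ≠ ⊤) (hne : (subdiff Φ x).Nonempty) :
    ∃ t, 0 ≤ t ∧ t ∈ subdiff Φ x := by
  obtain ⟨d, hd⟩ := hne
  rcases le_or_gt 0 d with hd0 | hd0
  · exact ⟨d, hd0, hd⟩
  have hmono := sub_mul_sub_nonneg_of_mem_subdiff hbot hx hd (neg_mem_subdiff_neg heven hd)
  obtain rfl : x = 0 := le_antisymm (by nlinarith) hx0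
  exact ⟨-d, by linarith, by simpa using neg_mem_subdiff_neg heven hd⟩

lemma coe_abs_le_of_forall_nonneg (heven : ∀ x, Φ (-x) = Φ x) {r : ℝ} {m : EReal}
    (H : ∀ u d : ℝ, |u| ≤ r → 0 ≤ d → d ∈ subdiff Φ u → (d : EReal) ≤ m) {u d : ℝ}
    (hu : |u| ≤ r) (hd : d ∈ subdiff Φ u) : ((|d| : ℝ) : EReal) ≤ m := by
  rcases le_or_gt 0 d with hd0 | hd0
  · rw [abs_of_nonneg hd0]
    exact H u d hu hd0 hd
  · rw [abs_of_neg hd0]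
    exact H (-u) (-d) (by rwa [abs_neg]) (by linarith) (neg_mem_subdiff_neg heven hd)

lemma mem_proxSet_of_mem_subdiff (hbot : ∀ x, Φ x ≠ ⊥) {γ u v : ℝ} (hγ : 0 < γ)
    (hd : (v - u) / γ ∈ subdiff Φ u) : u ∈ proxSet γ Φ v := by
  intro w
  by_cases hw : Φ w = ⊤
  · rw [hw, EReal.coe_mul_top_of_pos hγ, EReal.coe_add_top]
    exact le_top
  have hdw := hd w
  lift Φ u to ℝ using ⟨ne_top_of_mem_subdiff hd hw, hbot u⟩ with r
  lift Φ w to ℝ using ⟨hw, hbot w⟩ with s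
  have hslope : (v - u) / γ * (w - u) ≤ s - r := by
    linarith [(by exact_mod_cast hdw : r + (v - u) / γ * (w - u) ≤ s)]
  have key := mul_le_mul_of_nonneg_left hslope hγ.le
  rw [← mul_assoc, mul_div_cancel₀ _ hγ.ne'] at key
  have : 2⁻¹ * (u - v) ^ 2 + γ * r ≤ 2⁻¹ * (w - v) ^ 2 + γ * s := by
    nlinarith [sq_nonneg (w - u)]
  exact_mod_cast this

end Subdiff

namespace EConvexOn

variable {Φ : ℝ → EReal}

lemma le_coe_of_eq_coe (hΦ : EConvexOn Φ) {x y r s a b : ℝ} (hx : Φ x = r) (hy : Φ y = s)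
    (ha : 0 ≤ a) (hb : 0 ≤ b) (hab : a + b = 1) :
    Φ (a * x + b * y) ≤ ((a * r + b * s : ℝ) : EReal) := by
  simpa [hx, hy] using hΦ x y a b ha hb hab

lemma le_of_abs_le (hΦ : EConvexOn Φ) (heven : ∀ x, Φ (-x) = Φ x) {a b : ℝ} (hab : |a| ≤ |b|) :
    Φ a ≤ Φ b := by
  rw [← apply_abs_of_even heven a, ← apply_abs_of_even heven b]
  rcases (abs_nonneg b).eq_or_lt with hb | hb
  · rw [← hb, le_antisymm (hb ▸ hab) (abs_nonneg a)]
  set α := (|b| - |a|) / (2 * |b|) with hα_def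
  set β := (|a| + |b|) / (2 * |b|) with hβ_def
  have hα : 0 ≤ α := div_nonneg (by linarith) (by positivity)
  have hβ : 0 ≤ β := div_nonneg (by positivity) (by positivity)
  have hαβ : α + β = 1 := by rw [hα_def, hβ_def]; field_simp; ring
  have hcomb : α * -|b| + β * |b| = |a| := by rw [hα_def, hβ_def]; field_simp; ring
  calc Φ |a| = Φ (α * -|b| + β * |b|) := by rw [hcomb]
    _ ≤ α * Φ (-|b|) + β * Φ |b| := hΦ _ _ α β hα hβ hαβ
    _ = Φ |b| := by
      rw [heven, ← EReal.right_distrib_of_nonneg (by exact_mod_cast hα) (by exact_mod_cast hβ),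
        ← EReal.coe_add, hαβ, EReal.coe_one, one_mul]

lemma convexOn_toReal (hΦ : EConvexOn Φ) (hbot : ∀ x, Φ x ≠ ⊥) :
    ConvexOn ℝ {x | Φ x ≠ ⊤} (fun x => (Φ x).toReal) := by
  have key : ∀ x ∈ {x | Φ x ≠ ⊤}, ∀ y ∈ {x | Φ x ≠ ⊤}, ∀ a b : ℝ, 0 ≤ a → 0 ≤ b → a + b = 1 →
      Φ (a * x + b * y) ≤ ((a * (Φ x).toReal + b * (Φ y).toReal : ℝ) : EReal) :=
    fun x hx y hy a b ha hb hab => hΦ.le_coe_of_eq_coe (EReal.coe_toReal hx (hbot x)).symm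
      (EReal.coe_toReal hy (hbot y)).symm ha hb hab
  refine ⟨fun x hx y hy a b ha hb hab => ?_, fun x hx y hy a b ha hb hab => ?_⟩
  · exact ne_top_of_le_ne_top (EReal.coe_ne_top _) (key x hx y hy a b ha hb hab)
  · have h := key x hx y hy a b ha hb hab
    have hne := ne_top_of_le_ne_top (EReal.coe_ne_top _) h
    rw [← EReal.coe_toReal hne (hbot _), EReal.coe_le_coe_iff] at h
    simpa using h

/-- The right derivative of `Φ.toReal` at an interior point of `dom Φ` is a subgradient. -/
lemma subdiff_nonempty (hΦ : EConvexOn Φ) (hbot : ∀ x, Φ x ≠ ⊥) {x : ℝ}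
    (hx : x ∈ interior {y | Φ y ≠ ⊤}) : (subdiff Φ x).Nonempty := by
  have hf := hΦ.convexOn_toReal hbot
  set f : ℝ → ℝ := fun y => (Φ y).toReal
  refine ⟨derivWithin f (Ioi x) x, fun y => ?_⟩
  by_cases hy : Φ y = ⊤
  · simp [hy]
  have hxΦ : Φ x = f x := (EReal.coe_toReal (interior_subset hx) (hbot x)).symm
  have hyΦ : Φ y = f y := (EReal.coe_toReal hy (hbot y)).symm
  rw [hxΦ, hyΦ, ← EReal.coe_add, EReal.coe_le_coe_iff]
  rcases lt_trichotomy y x with hyx | rfl | hxy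
  · have hslope := (hf.slope_le_leftDeriv_of_mem_interior hy hx hyx).trans
      (hf.leftDeriv_le_rightDeriv_of_mem_interior hx)
    rw [slope_def_field, div_le_iff₀ (sub_pos.2 hyx)] at hslope
    linarith
  · simp
  · have hslope := hf.rightDeriv_le_slope_of_mem_interior hx hy hxy
    rw [slope_def_field, le_div_iff₀ (sub_pos.2 hxy)] at hslope
    linarith

lemma mem_subdiff_of_eventually (hΦ : EConvexOn Φ) (hbot : ∀ x, Φ x ≠ ⊥) {x d : ℝ}
    (hx : Φ x ≠ ⊤) (hd : ∀ᶠ y in 𝓝 x, Φ x + ((d * (y - x) : ℝ) : EReal) ≤ Φ y) :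
    d ∈ subdiff Φ x := by
  intro y
  by_cases hy : Φ y = ⊤
  · simp [hy]
  have hlim : Tendsto (fun t : ℝ => x + t * (y - x)) (𝓝[>] 0) (𝓝 x) :=
    (Continuous.tendsto' (by fun_prop) 0 x (by simp)).mono_left nhdsWithin_le_nhds
  obtain ⟨t, hzt, ht0, ht1⟩ := ((hlim.eventually hd).and (Ioo_mem_nhdsGT one_pos)).exists
  lift Φ x to ℝ using ⟨hx, hbot x⟩ with r hr
  lift Φ y to ℝ using ⟨hy, hbot y⟩ with s hs
  have hconv := hΦ.le_coe_of_eq_coe hr.symm hs.symm (sub_nonneg.2 ht1.le) ht0.le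
    (sub_add_cancel 1 t)
  rw [show (1 - t) * x + t * y = x + t * (y - x) by ring] at hconv
  have key : r + d * (x + t * (y - x) - x) ≤ (1 - t) * r + t * s := by
    exact_mod_cast hzt.trans hconv
  have : t * (r + d * (y - x)) ≤ t * s := by linarith
  exact_mod_cast le_of_mul_le_mul_left this ht0

lemma mem_subdiff_of_mem_proxSet (hΦ : EConvexOn Φ) (hbot : ∀ x, Φ x ≠ ⊥) {γ u v : ℝ}
    (hγ : 0 < γ) (hu : u ∈ proxSet γ Φ v) : (v - u) / γ ∈ subdiff Φ u := by
  intro y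
  by_cases hy : Φ y = ⊤
  · simp [hy]
  lift Φ y to ℝ using ⟨hy, hbot y⟩ with s hs
  have hfin : Φ u ≠ ⊤ := fun htop => by
    have huy := hu y
    rw [htop, ← hs, EReal.coe_mul_top_of_pos hγ, EReal.coe_add_top, top_le_iff] at huy
    exact EReal.coe_ne_top (2⁻¹ * (y - v) ^ 2 + γ * s) (by exact_mod_cast huy)
  lift Φ u to ℝ using ⟨hfin, hbot u⟩ with r hr
  suffices 0 ≤ (u - v) * (y - u) + γ * (s - r) by
    rw [← EReal.coe_add, EReal.coe_le_coe_iff, div_mul_eq_mul_div, ← sub_nonneg,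
      ← mul_nonneg_iff_of_pos_left hγ]
    field_simp
    linarith
  have hlim : Tendsto (fun t : ℝ => (u - v) * (y - u) + 2⁻¹ * t * (y - u) ^ 2 + γ * (s - r))
      (𝓝[>] 0) (𝓝 ((u - v) * (y - u) + γ * (s - r))) :=
    (Continuous.tendsto' (by fun_prop) 0 _ (by simp)).mono_left nhdsWithin_le_nhds
  refine ge_of_tendsto hlim ?_
  filter_upwards [Ioo_mem_nhdsGT one_pos] with t ⟨ht0, ht1⟩
  have hconv := hΦ.le_coe_of_eq_coe hr.symm hs.symm (sub_nonneg.2 ht1.le) ht0.le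
    (sub_add_cancel 1 t)
  have hmin := (hu ((1 - t) * u + t * y)).trans
    (add_le_add le_rfl (mul_le_mul_of_nonneg_left hconv (EReal.coe_nonneg.2 hγ.le)))
  rw [← hr] at hmin
  have hmin' : 2⁻¹ * (u - v) ^ 2 + γ * r ≤
      2⁻¹ * ((1 - t) * u + t * y - v) ^ 2 + γ * ((1 - t) * r + t * s) := by
    exact_mod_cast hmin
  have : 0 ≤ t * ((u - v) * (y - u) + 2⁻¹ * t * (y - u) ^ 2 + γ * (s - r)) := by nlinarith
  exact nonneg_of_mul_nonneg_right (by linarith) ht0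

lemma mem_proxSet_iff (hΦ : EConvexOn Φ) (hbot : ∀ x, Φ x ≠ ⊥) {γ u v : ℝ} (hγ : 0 < γ) :
    u ∈ proxSet γ Φ v ↔ (v - u) / γ ∈ subdiff Φ u :=
  ⟨hΦ.mem_subdiff_of_mem_proxSet hbot hγ, mem_proxSet_of_mem_subdiff hbot hγ⟩

lemma proxSet_eq_singleton (hΦ : EConvexOn Φ) (hbot : ∀ x, Φ x ≠ ⊥) {γ u v y : ℝ}
    (hγ : 0 < γ) (hd : (v - u) / γ ∈ subdiff Φ u) (hy : Φ y ≠ ⊤) : proxSet γ Φ v = {u} := by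
  refine subset_antisymm (fun u' hu' => ?_)
    (singleton_subset_iff.2 (mem_proxSet_of_mem_subdiff hbot hγ hd))
  have hmono := sub_mul_sub_nonneg_of_mem_subdiff hbot (ne_top_of_mem_subdiff hd hy) hd
    (hΦ.mem_subdiff_of_mem_proxSet hbot hγ hu')
  rw [show ((v - u) / γ - (v - u') / γ) * (u - u') = -((u - u') ^ 2 / γ) by field_simp; ring,
    neg_nonneg] at hmono
  have : (u - u') ^ 2 = 0 := le_antisymm
    ((div_nonpos_iff.1 hmono).elim (fun h => (h.2.not_gt hγ).elim) And.left) (sq_nonneg _)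
  exact (sub_eq_zero.1 (pow_eq_zero_iff two_ne_zero |>.1 this)).symm

end EConvexOn

lemma EReal.sub_add_eq_add_sub_coe (a b : EReal) (c : ℝ) : a - c + b = a + b - c := by
  rw [sub_eq_add_neg, sub_eq_add_neg, add_right_comm]

lemma EReal.coe_div_le_of_le_add_mul {a b c : ℝ} {m : EReal} (hc : 0 < c)
    (h : (a : EReal) ≤ b + c * m) : (((a - b) / c : ℝ) : EReal) ≤ m := by
  induction m with
  | bot => simp [EReal.coe_mul_bot_of_pos hc] at h
  | coe m =>
    have : a ≤ b + c * m := by exact_mod_cast h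
    exact EReal.coe_le_coe_iff.2 ((div_le_iff₀' hc).2 (by linarith))
  | top => exact le_top

lemma lt_abs_of_coe_lt_abs_add_mul {a b c d : ℝ} {m : EReal} (hc : 0 ≤ c)
    (hd : |a| ≤ b → ((|d| : ℝ) : EReal) ≤ m)
    (h : (b : EReal) + c * m < ((|a + c * d| : ℝ) : EReal)) : b < |a| := by
  by_contra! hab
  refine h.not_ge ?_
  calc ((|a + c * d| : ℝ) : EReal) ≤ ((|a| + c * |d| : ℝ) : EReal) := by
        rw [EReal.coe_le_coe_iff, ← abs_of_nonneg hc, ← abs_mul, abs_of_nonneg hc]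
        exact abs_add_le _ _
    _ = (|a| : ℝ) + (c : EReal) * ((|d| : ℝ) : EReal) := by push_cast; rfl
    _ ≤ b + c * m := add_le_add (EReal.coe_le_coe_iff.2 hab)
        (mul_le_mul_of_nonneg_left (hd hab) (EReal.coe_nonneg.2 hc))

section Conj

variable {f : ℝ → EReal}

lemma le_conj (f : ℝ → EReal) (v x : ℝ) : ((v * x : ℝ) : EReal) - f x ≤ conj f v :=
  le_iSup (fun x => ((v * x : ℝ) : EReal) - f x) x

lemma conj_nonneg (h0 : f 0 = 0) (v : ℝ) : 0 ≤ conj f v := by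
  simpa [h0] using le_conj f v 0

lemma conj_ne_bot (h0 : f 0 = 0) (v : ℝ) : conj f v ≠ ⊥ :=
  ne_bot_of_le_ne_bot EReal.zero_ne_bot (conj_nonneg h0 v)

lemma conj_zero (h0 : f 0 = 0) (hge : ∀ x, 0 ≤ f x) : conj f 0 = 0 :=
  le_antisymm (iSup_le fun x => by simpa using hge x) (conj_nonneg h0 0)

lemma conj_neg (heven : ∀ x, f (-x) = f x) (v : ℝ) : conj f (-v) = conj f v := by
  refine (Equiv.neg ℝ).iSup_congr fun x => ?_
  simp [heven]

lemma econvexOn_conj (hbot : ∀ x, f x ≠ ⊥) : EConvexOn (conj f) := by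
  intro p q a b ha hb hab
  refine iSup_le fun x => ?_
  by_cases hx : f x = ⊤
  · simp [hx]
  have hp := le_conj f p x
  have hq := le_conj f q x
  lift f x to ℝ using ⟨hx, hbot x⟩ with r
  have hsplit : (((a * p + b * q) * x : ℝ) : EReal) - r =
      a * (((p * x : ℝ) : EReal) - r) + b * (((q * x : ℝ) : EReal) - r) := by
    norm_cast
    linear_combination r * hab
  rw [hsplit]
  exact add_le_add (mul_le_mul_of_nonneg_left hp (EReal.coe_nonneg.2 ha))
    (mul_le_mul_of_nonneg_left hq (EReal.coe_nonneg.2 hb))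

lemma econvexOn_conj_of_nonneg (hge : ∀ x, 0 ≤ f x) : EConvexOn (conj f) :=
  econvexOn_conj fun x => ne_bot_of_le_ne_bot EReal.zero_ne_bot (hge x)

lemma lowerSemicontinuous_conj (f : ℝ → EReal) : LowerSemicontinuous (conj f) :=
  lowerSemicontinuous_iSup fun _ => EReal.lowerSemicontinuous_add.comp
    ((continuous_coe_real_ereal.comp (continuous_id.mul continuous_const)).prodMk continuous_const)

end Conj

section Gfun

variable {lam : ℝ} {h : ℝ → EReal}

lemma gfun_zero (h0 : h 0 = 0) : gfun lam h 0 = 0 := by simp [gfun, h0]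

lemma gfun_nonneg (hlam : 0 ≤ lam) (hge : ∀ x, 0 ≤ h x) (x : ℝ) : 0 ≤ gfun lam h x :=
  add_nonneg (by split_ifs <;> simp [hlam]) (hge x)

lemma gfun_neg (heven : ∀ x, h (-x) = h x) (x : ℝ) : gfun lam h (-x) = gfun lam h x := by
  simp [gfun, heven]

lemma coe_sub_gfun_of_ne_zero (v : ℝ) {x : ℝ} (hx : x ≠ 0) :
    ((v * x : ℝ) : EReal) - gfun lam h x = ((v * x : ℝ) : EReal) - h x - lam := by
  rw [gfun, if_neg hx, sub_eq_add_neg, sub_eq_add_neg, sub_eq_add_neg,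
    EReal.neg_add (.inl (EReal.coe_ne_bot _)) (.inl (EReal.coe_ne_top _)), sub_eq_add_neg,
    add_comm (-(lam : EReal)), add_assoc]

lemma conj_gfun (hlam : 0 ≤ lam) (h0 : h 0 = 0) (v : ℝ) :
    conj (gfun lam h) v = max 0 (conj h v - lam) := by
  refine le_antisymm (iSup_le fun x => ?_) (max_le (conj_nonneg (gfun_zero h0) v) ?_)
  · rcases eq_or_ne x 0 with rfl | hx
    · simp [gfun_zero h0]
    rw [coe_sub_gfun_of_ne_zero v hx]
    exact le_max_of_le_right (EReal.sub_le_sub (le_conj h v x) le_rfl)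
  · rw [EReal.sub_le_iff_le_add (.inl (EReal.coe_ne_bot lam)) (.inl (EReal.coe_ne_top lam))]
    refine iSup_le fun x => ?_
    rcases eq_or_ne x 0 with rfl | hx
    · simpa [h0] using add_nonneg (conj_nonneg (gfun_zero h0) v) (EReal.coe_nonneg.2 hlam)
    rw [← EReal.sub_le_iff_le_add (.inl (EReal.coe_ne_bot lam)) (.inl (EReal.coe_ne_top lam)),
      ← coe_sub_gfun_of_ne_zero v hx]
    exact le_conj _ v x

lemma conj_gfun_eq_zero (hlam : 0 ≤ lam) (h0 : h 0 = 0) {v : ℝ} (hv : conj h v ≤ lam) :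
    conj (gfun lam h) v = 0 := by
  rw [conj_gfun hlam h0, max_eq_left]
  rwa [EReal.sub_le_iff_le_add (.inl (EReal.coe_ne_bot lam)) (.inl (EReal.coe_ne_top lam)),
    zero_add]

lemma conj_gfun_eq_sub (hlam : 0 ≤ lam) (h0 : h 0 = 0) {v : ℝ} (hv : lam ≤ conj h v) :
    conj (gfun lam h) v = conj h v - lam := by
  rw [conj_gfun hlam h0, max_eq_right]
  rwa [EReal.le_sub_iff_add_le (.inl (EReal.coe_ne_bot lam)) (.inl (EReal.coe_ne_top lam)),
    zero_add]

end Gfun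

section Tau

variable {lam : ℝ} {h : ℝ → EReal}

lemma bddAbove_tau (hge : ∀ x, 0 ≤ h x) (hdom : ∃ x : ℝ, 0 < x ∧ h x ≠ ⊤) :
    BddAbove {v : ℝ | 0 ≤ v ∧ conj h v ≤ (lam : EReal)} := by
  obtain ⟨x, hx, hfin⟩ := hdom
  lift h x to ℝ using ⟨hfin, ne_bot_of_le_ne_bot EReal.zero_ne_bot (hge x)⟩ with r hr
  refine ⟨(lam + r) / x, fun v ⟨_, hv⟩ => ?_⟩
  have : v * x - r ≤ lam := by
    have := (le_conj h v x).trans hv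
    rw [← hr] at this
    exact_mod_cast this
  rw [le_div_iff₀ hx]
  linarith

lemma tau_mem (hlam : 0 ≤ lam) (h0 : h 0 = 0) (hge : ∀ x, 0 ≤ h x)
    (hdom : ∃ x : ℝ, 0 < x ∧ h x ≠ ⊤) :
    0 ≤ tau lam h ∧ conj h (tau lam h) ≤ lam :=
  IsClosed.csSup_mem (isClosed_Ici.inter ((lowerSemicontinuous_conj h).isClosed_preimage _))
    ⟨0, self_mem_Ici, by simpa [conj_zero h0 hge] using hlam⟩ (bddAbove_tau hge hdom)

lemma lam_lt_conj_of_tau_lt (hlam : 0 ≤ lam) (h0 : h 0 = 0) (hge : ∀ x, 0 ≤ h x)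
    (hdom : ∃ x : ℝ, 0 < x ∧ h x ≠ ⊤) {w : ℝ} (hw : tau lam h < w) : (lam : EReal) < conj h w :=
  lt_of_not_ge fun hle => hw.not_ge <|
    le_csSup (bddAbove_tau hge hdom) ⟨(tau_mem hlam h0 hge hdom).1.trans hw.le, hle⟩

lemma lam_le_conj_of_tau_lt_abs (hlam : 0 ≤ lam) (h0 : h 0 = 0) (hge : ∀ x, 0 ≤ h x)
    (hdom : ∃ x : ℝ, 0 < x ∧ h x ≠ ⊤) (heven : ∀ x, h (-x) = h x) {v : ℝ}
    (hv : tau lam h < |v|) : lam ≤ conj h v := by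
  rw [← apply_abs_of_even (conj_neg heven)]
  exact (lam_lt_conj_of_tau_lt hlam h0 hge hdom hv).le

lemma conj_le_lam_of_abs_le_tau (hlam : 0 ≤ lam) (h0 : h 0 = 0) (hge : ∀ x, 0 ≤ h x)
    (hdom : ∃ x : ℝ, 0 < x ∧ h x ≠ ⊤) (heven : ∀ x, h (-x) = h x) {v : ℝ}
    (hv : |v| ≤ tau lam h) : conj h v ≤ lam :=
  ((econvexOn_conj_of_nonneg hge).le_of_abs_le
    (conj_neg heven) (hv.trans (le_abs_self _))).trans (tau_mem hlam h0 hge hdom).2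

lemma tau_mem_interior (hlam : 0 ≤ lam) (h0 : h 0 = 0) (hge : ∀ x, 0 ≤ h x)
    (hdom : ∃ x : ℝ, 0 < x ∧ h x ≠ ⊤) (heven : ∀ x, h (-x) = h x) {w : ℝ} (hw : tau lam h < w)
    (hfin : conj h w ≠ ⊤) : tau lam h ∈ interior {y | conj h y ≠ ⊤} := by
  have hF : EConvexOn (conj h) := econvexOn_conj_of_nonneg hge
  have hsub : Ioo (-w) w ⊆ {y | conj h y ≠ ⊤} := fun y hy =>
    ne_top_of_le_ne_top hfin <|
      hF.le_of_abs_le (conj_neg heven) ((abs_lt.2 hy).le.trans (le_abs_self w))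
  have hτ := (tau_mem hlam h0 hge hdom).1
  exact interior_mono hsub (by rw [isOpen_Ioo.interior_eq]; exact ⟨by linarith, hw⟩)

lemma conj_tau_eq (hlam : 0 ≤ lam) (h0 : h 0 = 0) (hge : ∀ x, 0 ≤ h x)
    (hdom : ∃ x : ℝ, 0 < x ∧ h x ≠ ⊤) (heven : ∀ x, h (-x) = h x) {w : ℝ} (hw : tau lam h < w)
    (hfin : conj h w ≠ ⊤) : conj h (tau lam h) = lam := by
  have hint := tau_mem_interior hlam h0 hge hdom heven hw hfin
  have hF : EConvexOn (conj h) := econvexOn_conj_of_nonneg hge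
  have hcont := (hF.convexOn_toReal (conj_ne_bot h0)).continuousOn_interior.continuousAt
    (isOpen_interior.mem_nhds hint)
  have hle : lam ≤ (conj h (tau lam h)).toReal := by
    refine ge_of_tendsto (hcont.tendsto.mono_left (nhdsWithin_le_nhds (s := Ioi (tau lam h)))) ?_
    filter_upwards [self_mem_nhdsWithin, nhdsWithin_le_nhds (mem_interior_iff_mem_nhds.1 hint)]
      with z hz hzdom
    have := lam_lt_conj_of_tau_lt hlam h0 hge hdom hz
    rw [← EReal.coe_toReal hzdom (conj_ne_bot h0 z)] at this
    exact_mod_cast this.le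
  refine le_antisymm (tau_mem hlam h0 hge hdom).2 ?_
  rw [← EReal.coe_toReal (interior_subset hint) (conj_ne_bot h0 _)]
  exact_mod_cast hle

end Tau

section Mu

variable {lam : ℝ} {h : ℝ → EReal}

lemma coe_le_mu {t : ℝ} (ht0 : 0 ≤ t) (ht : t ∈ subdiff (conj h) (tau lam h)) :
    (t : EReal) ≤ mu lam h := by
  rw [mu, if_pos ⟨t, ht⟩]
  exact le_sSup ⟨t, ⟨ht0, ht⟩, rfl⟩

lemma mu_eq_top_or_exists_nonneg_mem_subdiff (hlam : 0 ≤ lam) (h0 : h 0 = 0)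
    (hge : ∀ x, 0 ≤ h x) (hdom : ∃ x : ℝ, 0 < x ∧ h x ≠ ⊤) (heven : ∀ x, h (-x) = h x) :
    mu lam h = ⊤ ∨ ∃ t, 0 ≤ t ∧ t ∈ subdiff (conj h) (tau lam h) := by
  by_cases hne : (subdiff (conj h) (tau lam h)).Nonempty
  · exact .inr <| exists_nonneg_mem_subdiff_of_even (conj_ne_bot h0) (conj_neg heven)
      (tau_mem hlam h0 hge hdom).1
      (ne_top_of_le_ne_top (EReal.coe_ne_top lam) (tau_mem hlam h0 hge hdom).2) hne
  · exact .inl (if_neg hne)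

lemma le_conj_of_le_mu (hlam : 0 ≤ lam) (h0 : h 0 = 0) (hge : ∀ x, 0 ≤ h x)
    (hdom : ∃ x : ℝ, 0 < x ∧ h x ≠ ⊤) (heven : ∀ x, h (-x) = h x) {s w : ℝ}
    (hs : (s : EReal) ≤ mu lam h) (hw : tau lam h < w) :
    ((lam + s * (w - tau lam h) : ℝ) : EReal) ≤ conj h w := by
  by_cases hfin : conj h w = ⊤
  · simp [hfin]
  have hτ := conj_tau_eq hlam h0 hge hdom heven hw hfin
  have hne := (econvexOn_conj_of_nonneg hge).subdiff_nonempty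
    (conj_ne_bot h0) (tau_mem_interior hlam h0 hge hdom heven hw hfin)
  lift conj h w to ℝ using ⟨hfin, conj_ne_bot h0 w⟩ with r hr
  have hμ : mu lam h ≤ (((r - lam) / (w - tau lam h) : ℝ) : EReal) := by
    rw [mu, if_pos hne]
    refine sSup_le ?_
    rintro _ ⟨t, ⟨-, ht⟩, rfl⟩
    have htw := ht w
    rw [hτ, ← hr] at htw
    have : lam + t * (w - tau lam h) ≤ r := by exact_mod_cast htw
    exact EReal.coe_le_coe_iff.2 ((le_div_iff₀ (sub_pos.2 hw)).2 (by linarith))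
  have : s ≤ (r - lam) / (w - tau lam h) := by exact_mod_cast hs.trans hμ
  rw [le_div_iff₀ (sub_pos.2 hw)] at this
  exact_mod_cast (by linarith)

lemma abs_le_mu_of_mem_subdiff_conj (hlam : 0 ≤ lam) (h0 : h 0 = 0) (hge : ∀ x, 0 ≤ h x)
    (hdom : ∃ x : ℝ, 0 < x ∧ h x ≠ ⊤) (heven : ∀ x, h (-x) = h x) {u d : ℝ}
    (hu : |u| ≤ tau lam h) (hd : d ∈ subdiff (conj h) u) : ((|d| : ℝ) : EReal) ≤ mu lam h := by
  refine coe_abs_le_of_forall_nonneg (conj_neg heven) (fun u d hu hd0 hd => ?_) hu hd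
  rcases (le_abs_self u).trans hu |>.eq_or_lt with heq | hlt
  · exact coe_le_mu hd0 (heq ▸ hd)
  rcases mu_eq_top_or_exists_nonneg_mem_subdiff hlam h0 hge hdom heven with hμ | ⟨t, ht0, ht⟩
  · simp [hμ]
  have hmono := sub_mul_sub_nonneg_of_mem_subdiff (conj_ne_bot h0)
    (ne_top_of_le_ne_top (EReal.coe_ne_top lam) (tau_mem hlam h0 hge hdom).2) ht hd
  have hdt : d ≤ t := by nlinarith
  exact (EReal.coe_le_coe_iff.2 hdt).trans (coe_le_mu ht0 ht)

lemma mem_subdiff_conj_gfun_tau (hlam : 0 ≤ lam) (h0 : h 0 = 0) (hge : ∀ x, 0 ≤ h x)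
    (hdom : ∃ x : ℝ, 0 < x ∧ h x ≠ ⊤) (heven : ∀ x, h (-x) = h x) {s : ℝ} (hs0 : 0 ≤ s)
    (hs : (s : EReal) ≤ mu lam h) : s ∈ subdiff (conj (gfun lam h)) (tau lam h) := by
  have hφτ := conj_gfun_eq_zero hlam h0 (tau_mem hlam h0 hge hdom).2
  have hzero : (0 : ℝ) ∈ subdiff (conj (gfun lam h)) (tau lam h) := fun y => by
    simpa [hφτ] using conj_nonneg (gfun_zero h0) y
  refine mem_subdiff_of_le_of_forall_lt hzero hs0 fun y hy => ?_
  rw [hφτ, zero_add, conj_gfun_eq_sub hlam h0 (lam_lt_conj_of_tau_lt hlam h0 hge hdom hy).le,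
    EReal.le_sub_iff_add_le (.inl (EReal.coe_ne_bot lam)) (.inl (EReal.coe_ne_top lam)), add_comm]
  exact_mod_cast le_conj_of_le_mu hlam h0 hge hdom heven hs hy

lemma abs_le_mu_of_mem_subdiff_conj_gfun (hlam : 0 ≤ lam) (h0 : h 0 = 0) (hge : ∀ x, 0 ≤ h x)
    (hdom : ∃ x : ℝ, 0 < x ∧ h x ≠ ⊤) (heven : ∀ x, h (-x) = h x) {u d : ℝ}
    (hu : |u| ≤ tau lam h) (hd : d ∈ subdiff (conj (gfun lam h)) u) :
    ((|d| : ℝ) : EReal) ≤ mu lam h := by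
  refine coe_abs_le_of_forall_nonneg (conj_neg (gfun_neg heven)) (fun u d hu hd0 hd => ?_) hu hd
  rcases mu_eq_top_or_exists_nonneg_mem_subdiff hlam h0 hge hdom heven with hμ | ⟨t, ht0, ht⟩
  · simp [hμ]
  have hφu := conj_gfun_eq_zero hlam h0 (conj_le_lam_of_abs_le_tau hlam h0 hge hdom heven hu)
  have hmax : max t d ∈ subdiff (conj h) (tau lam h) := by
    refine mem_subdiff_of_le_of_forall_lt ht (le_max_left t d) fun y hy => ?_
    rcases max_cases t d with ⟨hm, -⟩ | ⟨hm, -⟩ <;> rw [hm]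
    · exact ht y
    have hdy := hd y
    rw [hφu, zero_add, conj_gfun_eq_sub hlam h0 (lam_lt_conj_of_tau_lt hlam h0 hge hdom hy).le,
      EReal.le_sub_iff_add_le (.inl (EReal.coe_ne_bot lam)) (.inl (EReal.coe_ne_top lam))] at hdy
    refine le_trans ?_ ((add_comm _ _).trans_le hdy)
    refine add_le_add (tau_mem hlam h0 hge hdom).2 (EReal.coe_le_coe_iff.2 ?_)
    exact mul_le_mul_of_nonneg_left (by linarith [le_abs_self u]) hd0
  exact (EReal.coe_le_coe_iff.2 (le_max_right t d)).trans
    (coe_le_mu (ht0.trans (le_max_left t d)) hmax)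

end Mu

section Locality

variable {lam : ℝ} {h : ℝ → EReal}

lemma mem_subdiff_conj_gfun_of_mem_subdiff_conj (hlam : 0 ≤ lam) (h0 : h 0 = 0)
    (hge : ∀ x, 0 ≤ h x) (hdom : ∃ x : ℝ, 0 < x ∧ h x ≠ ⊤) (heven : ∀ x, h (-x) = h x) {u d : ℝ}
    (hu : tau lam h < |u|) (hd : d ∈ subdiff (conj h) u) : d ∈ subdiff (conj (gfun lam h)) u := by
  intro y
  rw [conj_gfun_eq_sub hlam h0 (lam_le_conj_of_tau_lt_abs hlam h0 hge hdom heven hu),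
    EReal.sub_add_eq_add_sub_coe]
  exact (EReal.sub_le_sub (hd y) le_rfl).trans ((conj_gfun hlam h0 y).symm ▸ le_max_right _ _)

lemma mem_subdiff_conj_of_mem_subdiff_conj_gfun (hlam : 0 ≤ lam) (h0 : h 0 = 0)
    (hge : ∀ x, 0 ≤ h x) (hdom : ∃ x : ℝ, 0 < x ∧ h x ≠ ⊤) (heven : ∀ x, h (-x) = h x) {u d : ℝ}
    (hu : tau lam h < |u|) (hd : d ∈ subdiff (conj (gfun lam h)) u) : d ∈ subdiff (conj h) u := by
  have hφ : ∀ y, tau lam h < |y| → conj (gfun lam h) y = conj h y - lam := fun y hy =>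
    conj_gfun_eq_sub hlam h0 (lam_le_conj_of_tau_lt_abs hlam h0 hge hdom heven hy)
  have hfin : conj h u ≠ ⊤ := by
    have := ne_top_of_mem_subdiff hd (y := 0)
      (by simp [conj_zero (gfun_zero h0) (gfun_nonneg hlam hge)])
    rw [hφ u hu] at this
    exact fun htop => this (by rw [htop, EReal.top_sub_coe])
  refine (econvexOn_conj_of_nonneg hge).mem_subdiff_of_eventually
    (conj_ne_bot h0) hfin ?_
  filter_upwards [(isOpen_lt continuous_const continuous_abs).mem_nhds hu] with y hy
  have hdy := hd y
  rwa [hφ u hu, hφ y hy, EReal.sub_add_eq_add_sub_coe,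
    EReal.sub_le_iff_le_add (.inl (EReal.coe_ne_bot lam)) (.inl (EReal.coe_ne_top lam)),
    EReal.sub_add_cancel] at hdy

end Locality

section Prox

variable {lam : ℝ} {h : ℝ → EReal}

lemma proxSet_conj_gfun_of_abs_le_tau (hlam : 0 ≤ lam) (h0 : h 0 = 0) (hge : ∀ x, 0 ≤ h x)
    (hdom : ∃ x : ℝ, 0 < x ∧ h x ≠ ⊤) (heven : ∀ x, h (-x) = h x) {γ v : ℝ} (hγ : 0 < γ)
    (hv : |v| ≤ tau lam h) : proxSet γ (conj (gfun lam h)) v = {v} := by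
  have hφv := conj_gfun_eq_zero hlam h0 (conj_le_lam_of_abs_le_tau hlam h0 hge hdom heven hv)
  have hmin : (v - v) / γ ∈ subdiff (conj (gfun lam h)) v := fun y => by
    simpa [hφv] using conj_nonneg (gfun_zero h0) y
  exact (econvexOn_conj_of_nonneg (gfun_nonneg hlam hge)).proxSet_eq_singleton
    (conj_ne_bot (gfun_zero h0)) hγ hmin (hφv ▸ EReal.zero_ne_top)

lemma proxSet_conj_gfun_of_tau_lt_of_le (hlam : 0 ≤ lam) (h0 : h 0 = 0) (hge : ∀ x, 0 ≤ h x)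
    (hdom : ∃ x : ℝ, 0 < x ∧ h x ≠ ⊤) (heven : ∀ x, h (-x) = h x) {γ v : ℝ} (hγ : 0 < γ)
    (hv₁ : tau lam h < |v|) (hv₂ : ((|v| : ℝ) : EReal) ≤ (tau lam h : EReal) + γ * mu lam h) :
    proxSet γ (conj (gfun lam h)) v = {tau lam h * Real.sign v} := by
  have hs := mem_subdiff_conj_gfun_tau hlam h0 hge hdom heven
    (div_nonneg (sub_nonneg.2 hv₁.le) hγ.le) (EReal.coe_div_le_of_le_add_mul hγ hv₂)
  have hmem : (v - tau lam h * Real.sign v) / γ ∈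
      subdiff (conj (gfun lam h)) (tau lam h * Real.sign v) := by
    rcases lt_or_gt_of_ne (abs_pos.1 ((tau_mem hlam h0 hge hdom).1.trans_lt hv₁)) with hneg | hpos
    · rw [Real.sign_of_neg hneg, mul_neg_one]
      convert neg_mem_subdiff_neg (conj_neg (gfun_neg heven)) hs using 1
      rw [abs_of_neg hneg]
      ring
    · rwa [Real.sign_of_pos hpos, mul_one, ← abs_of_pos hpos]
  exact (econvexOn_conj_of_nonneg (gfun_nonneg hlam hge)).proxSet_eq_singleton
    (conj_ne_bot (gfun_zero h0)) hγ hmem (y := 0)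
    (by simp [conj_zero (gfun_zero h0) (gfun_nonneg hlam hge)])

lemma proxSet_conj_gfun_of_lt (hlam : 0 ≤ lam) (h0 : h 0 = 0) (hge : ∀ x, 0 ≤ h x)
    (hdom : ∃ x : ℝ, 0 < x ∧ h x ≠ ⊤) (heven : ∀ x, h (-x) = h x) {γ v : ℝ} (hγ : 0 < γ)
    (hv : (tau lam h : EReal) + γ * mu lam h < ((|v| : ℝ) : EReal)) :
    proxSet γ (conj (gfun lam h)) v = proxSet γ (conj h) v := by
  ext u
  rw [(econvexOn_conj_of_nonneg (gfun_nonneg hlam hge)).mem_proxSet_iff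
      (conj_ne_bot (gfun_zero h0)) hγ,
    (econvexOn_conj_of_nonneg hge).mem_proxSet_iff (conj_ne_bot h0) hγ]
  have hv' : (tau lam h : EReal) + γ * mu lam h < ((|u + γ * ((v - u) / γ)| : ℝ) : EReal) := by
    rwa [mul_div_cancel₀ _ hγ.ne', add_sub_cancel]
  exact ⟨fun hd => mem_subdiff_conj_of_mem_subdiff_conj_gfun hlam h0 hge hdom heven
      (lt_abs_of_coe_lt_abs_add_mul hγ.le
        (fun hu => abs_le_mu_of_mem_subdiff_conj_gfun hlam h0 hge hdom heven hu hd) hv') hd,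
    fun hd => mem_subdiff_conj_gfun_of_mem_subdiff_conj hlam h0 hge hdom heven
      (lt_abs_of_coe_lt_abs_add_mul hγ.le
        (fun hu => abs_le_mu_of_mem_subdiff_conj hlam h0 hge hdom heven hu hd) hv') hd⟩

end Prox

theorem prox_conj_gfun_general (lam : ℝ) (h : ℝ → EReal) (hlam : 0 < lam)
    (h0 : h 0 = 0) (hge : ∀ x : ℝ, 0 ≤ h x)
    (hdom : ∃ x : ℝ, 0 < x ∧ h x ≠ ⊤) (heven : ∀ x : ℝ, h (-x) = h x)
    (γ : ℝ) (hγ : 0 < γ) :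
    ∀ v : ℝ,
      ((|v| ≤ tau lam h → proxSet γ (conj (gfun lam h)) v = {v}) ∧
       (tau lam h < |v| →
          ((|v| : ℝ) : EReal) ≤ (tau lam h : EReal) + (γ : EReal) * mu lam h →
          proxSet γ (conj (gfun lam h)) v = {tau lam h * Real.sign v}) ∧
       ((tau lam h : EReal) + (γ : EReal) * mu lam h < ((|v| : ℝ) : EReal) →
          proxSet γ (conj (gfun lam h)) v = proxSet γ (conj h) v)) := fun _ =>
  ⟨proxSet_conj_gfun_of_abs_le_tau hlam.le h0 hge hdom heven hγ,
    proxSet_conj_gfun_of_tau_lt_of_le hlam.le h0 hge hdom heven hγ,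
    proxSet_conj_gfun_of_lt hlam.le h0 hge hdom heven hγ⟩

theorem prox_conj_gfun (lam : ℝ) (h : ℝ → EReal) (hlam : 0 < lam)
    (h0 : h 0 = 0) (hge : ∀ x : ℝ, 0 ≤ h x)
    (hlsc : LowerSemicontinuous h) (hconv : EConvexOn h)
    (hdom : ∃ x : ℝ, 0 < x ∧ h x ≠ ⊤) (heven : ∀ x : ℝ, h (-x) = h x)
    (γ : ℝ) (hγ : 0 < γ) :
    ∀ v : ℝ,
      ((|v| ≤ tau lam h → proxSet γ (conj (gfun lam h)) v = {v}) ∧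
       (tau lam h < |v| →
          ((|v| : ℝ) : EReal) ≤ (tau lam h : EReal) + (γ : EReal) * mu lam h →
          proxSet γ (conj (gfun lam h)) v = {tau lam h * Real.sign v}) ∧
       ((tau lam h : EReal) + (γ : EReal) * mu lam h < ((|v| : ℝ) : EReal) →
          proxSet γ (conj (gfun lam h)) v = proxSet γ (conj h) v)) :=
  prox_conj_gfun_general lam h hlam h0 hge hdom heven γ hγ
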